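/- Under the projector hypotheses with n ≥ 5 and ρ ≠ 0, the projector P can be recovered from T = ρ[((n−2)(n−3)/2)(g⊙g) + (P⊙P) − (n−3)(g⊙P)] by the formula P_{λκ} = [2(n−2)²/((n−1)(n−4))] · (T·T)_{λν}{}^ν{}_κ / (T·T)_{μν}{}^{μν} + [(n−2)(n−3)/((n−1)(n−4))] · Ḡ_{λκ}, for all indices λ, κ (the denominator (T·T)_{μν}{}^{μν} being nonzero). -/

import Mathlib

open Finset

variable {ι : Type*} [Fintype ι] [DecidableEq ι]

/-- Kulkarni–Nomizu product of two 2-tensors: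
`(A⊙B)_{μνλκ} = A_{μλ}B_{νκ} − A_{νλ}B_{μκ} − A_{μκ}B_{νλ} + A_{νκ}B_{μλ}`. -/
def KN (A B : ι → ι → ℝ) : ι → ι → ι → ι → ℝ :=
  fun μ ν l κ => A μ l * B ν κ - A ν l * B μ κ - A μ κ * B ν l + A ν κ * B μ l

/-- Contraction of two 2-tensors via the inverse metric:
`(A·B)_{μκ} = Σ_{ν,λ} A_{μν}(Ḡ⁻¹)_{νλ}B_{λκ}`. -/
def dot2 (Ginv : ι → ι → ℝ) (A B : ι → ι → ℝ) : ι → ι → ℝ :=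
  fun μ κ => ∑ ν, ∑ l, A μ ν * Ginv ν l * B l κ

/-- Contraction of two 4-tensors via the inverse metric:
`(R·S)_{μνλκ} = Σ R_{μνστ}(Ḡ⁻¹)_{σσ'}(Ḡ⁻¹)_{ττ'}S_{σ'τ'λκ}`. -/
def dot4 (Ginv : ι → ι → ℝ) (R S : ι → ι → ι → ι → ℝ) : ι → ι → ι → ι → ℝ :=
  fun μ ν l κ => ∑ σ, ∑ τ, ∑ σ', ∑ τ', R μ ν σ τ * Ginv σ σ' * Ginv τ τ' * S σ' τ' l κ

/-- Trace of a 2-tensor: `tr A = Σ_{μ,ν} (Ḡ⁻¹)_{μν}A_{νμ}`. -/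
def tr2 (Ginv : ι → ι → ℝ) (A : ι → ι → ℝ) : ℝ :=
  ∑ μ, ∑ ν, Ginv μ ν * A ν μ

/-- Partial trace of a 4-tensor: `R_{μν}{}^ν{}_κ = Σ_{ν,ν'} (Ḡ⁻¹)_{νν'} R_{μνν'κ}`. -/
def ptr4 (Ginv : ι → ι → ℝ) (R : ι → ι → ι → ι → ℝ) : ι → ι → ℝ :=
  fun μ κ => ∑ ν, ∑ ν', Ginv ν ν' * R μ ν ν' κ

/-- Full trace of a 4-tensor: `R_{μν}{}^{μν} = Σ (Ḡ⁻¹)_{μμ'}(Ḡ⁻¹)_{νν'} R_{μνμ'ν'}`. -/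
def ftr4 (Ginv : ι → ι → ℝ) (R : ι → ι → ι → ι → ℝ) : ℝ :=
  ∑ μ, ∑ μ', ∑ ν, ∑ ν', Ginv μ μ' * Ginv ν ν' * R μ ν μ' ν'

/-- The curvature 4-tensor of a generalized Schwarzschild–Tangherlini geometry,
`T = ρ[((n−2)(n−3)/2)(g⊙g) + (P⊙P) − (n−3)(g⊙P)]`. -/
noncomputable def Tgst (n : ℕ) (ρ : ℝ) (g P : ι → ι → ℝ) : ι → ι → ι → ι → ℝ :=
  fun μ ν l κ => ρ * (((n : ℝ) - 2) * ((n : ℝ) - 3) / 2 * KN g g μ ν l κ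
    + KN P P μ ν l κ - ((n : ℝ) - 3) * KN g P μ ν l κ)

/-!
Contracting two Kulkarni–Nomizu products gives `(A⊙B)·(C⊙D) = 2[(A·C)⊙(B·D) + (A·D)⊙(B·C)]`,
so the relations `g·g = g`, `P·P = P`, `g·P = P·g = 0` keep `T·T` in the span of
`g⊙g`, `P⊙P` and `g⊙P`. Traces of Kulkarni–Nomizu products are explicit in terms of `tr g = 2`
and `tr P = n − 2`, so the partial trace of `T·T` is a combination of `g` and `P` and its full
trace is `4ρ²(n−1)(n−2)²(n−3) ≠ 0`. The normalised partial trace plus the stated multiple of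
`Ḡ = g + P` then cancels `g` and leaves `P`.
-/

theorem symm_of_inverse {Gbar Ginv : ι → ι → ℝ} (hGsymm : ∀ μ ν, Gbar μ ν = Gbar ν μ)
    (hGinv : ∀ μ l, ∑ ν, Gbar μ ν * Ginv ν l = if μ = l then (1 : ℝ) else 0) (μ ν : ι) :
    Ginv μ ν = Ginv ν μ := by
  have hinv : (Matrix.of Gbar)⁻¹ = Matrix.of Ginv := Matrix.inv_eq_right_inv <| by
    ext μ l; simpa [Matrix.mul_apply, Matrix.one_apply] using hGinv μ l
  have hsymm : (Matrix.of Gbar).IsSymm := by ext i j; exact hGsymm j i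
  have := congrFun (congrFun hsymm.inv ν) μ
  rwa [hinv] at this

section Contraction

omit [DecidableEq ι]

variable {Ginv : ι → ι → ℝ}

theorem sum4_mul_eq_mul_sum2 (f g : ι → ι → ℝ) :
    ∑ a, ∑ b, ∑ c, ∑ d, f a c * g b d = (∑ a, ∑ c, f a c) * ∑ b, ∑ d, g b d := by
  simp only [← mul_sum, ← sum_mul]

theorem dot4_KN_KN (A B C D : ι → ι → ℝ) (μ ν l κ : ι) :
    dot4 Ginv (KN A B) (KN C D) μ ν l κ =
      2 * (KN (dot2 Ginv A C) (dot2 Ginv B D) μ ν l κ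
        + KN (dot2 Ginv A D) (dot2 Ginv B C) μ ν l κ) := by
  -- each of the 16 terms splits as a `σσ'`-contraction times a `ττ'`-contraction
  have expand : dot4 Ginv (KN A B) (KN C D) μ ν l κ =
      ∑ σ, ∑ τ, ∑ σ', ∑ τ',
        ((A μ σ * Ginv σ σ' * C σ' l) * (B ν τ * Ginv τ τ' * D τ' κ)
        - (A μ σ * Ginv σ σ' * D σ' κ) * (B ν τ * Ginv τ τ' * C τ' l)
        - (A μ σ * Ginv σ σ' * C σ' κ) * (B ν τ * Ginv τ τ' * D τ' l)
        + (A μ σ * Ginv σ σ' * D σ' l) * (B ν τ * Ginv τ τ' * C τ' κ)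
        - (A ν σ * Ginv σ σ' * C σ' l) * (B μ τ * Ginv τ τ' * D τ' κ)
        + (A ν σ * Ginv σ σ' * D σ' κ) * (B μ τ * Ginv τ τ' * C τ' l)
        + (A ν σ * Ginv σ σ' * C σ' κ) * (B μ τ * Ginv τ τ' * D τ' l)
        - (A ν σ * Ginv σ σ' * D σ' l) * (B μ τ * Ginv τ τ' * C τ' κ)
        - (B ν σ * Ginv σ σ' * C σ' l) * (A μ τ * Ginv τ τ' * D τ' κ)
        + (B ν σ * Ginv σ σ' * D σ' κ) * (A μ τ * Ginv τ τ' * C τ' l)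
        + (B ν σ * Ginv σ σ' * C σ' κ) * (A μ τ * Ginv τ τ' * D τ' l)
        - (B ν σ * Ginv σ σ' * D σ' l) * (A μ τ * Ginv τ τ' * C τ' κ)
        + (B μ σ * Ginv σ σ' * C σ' l) * (A ν τ * Ginv τ τ' * D τ' κ)
        - (B μ σ * Ginv σ σ' * D σ' κ) * (A ν τ * Ginv τ τ' * C τ' l)
        - (B μ σ * Ginv σ σ' * C σ' κ) * (A ν τ * Ginv τ τ' * D τ' l)
        + (B μ σ * Ginv σ σ' * D σ' l) * (A ν τ * Ginv τ τ' * C τ' κ)) := by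
    refine sum_congr rfl fun σ _ => sum_congr rfl fun τ _ =>
      sum_congr rfl fun σ' _ => sum_congr rfl fun τ' _ => ?_
    simp only [KN]; ring
  rw [expand]
  simp only [sum_add_distrib, sum_sub_distrib, sum4_mul_eq_mul_sum2, KN, dot2]
  ring

theorem dot2_swap (hG : ∀ a b, Ginv a b = Ginv b a) {A B : ι → ι → ℝ}
    (hA : ∀ a b, A a b = A b a) (hB : ∀ a b, B a b = B b a) (μ ν : ι) :
    dot2 Ginv B A μ ν = dot2 Ginv A B ν μ := by
  simp only [dot2]
  rw [sum_comm]
  refine sum_congr rfl fun x _ => sum_congr rfl fun y _ => ?_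
  rw [hA ν, hB y, hG]
  ring

theorem ptr4_KN (hG : ∀ a b, Ginv a b = Ginv b a) {A B : ι → ι → ℝ}
    (hA : ∀ a b, A a b = A b a) (hB : ∀ a b, B a b = B b a) (μ κ : ι) :
    ptr4 Ginv (KN A B) μ κ =
      dot2 Ginv A B μ κ + dot2 Ginv B A μ κ - tr2 Ginv A * B μ κ - tr2 Ginv B * A μ κ := by
  have expand : ptr4 Ginv (KN A B) μ κ =
      ∑ ν, ∑ ν', (A μ ν' * Ginv ν' ν * B ν κ + B μ ν' * Ginv ν' ν * A ν κ
        - Ginv ν ν' * A ν' ν * B μ κ - Ginv ν ν' * B ν' ν * A μ κ) := by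
    refine sum_congr rfl fun ν _ => sum_congr rfl fun ν' _ => ?_
    simp only [KN]
    rw [hG ν' ν, hA ν' ν, hB ν' ν]
    ring
  rw [expand]
  simp only [sum_add_distrib, sum_sub_distrib, dot2, tr2, sum_mul]
  rw [sum_comm (f := fun ν ν' => A μ ν' * Ginv ν' ν * B ν κ),
    sum_comm (f := fun ν ν' => B μ ν' * Ginv ν' ν * A ν κ)]

theorem ftr4_eq_neg_tr2_ptr4 (hG : ∀ a b, Ginv a b = Ginv b a) {R : ι → ι → ι → ι → ℝ}
    (hR : ∀ μ ν l κ, R μ ν κ l = -R μ ν l κ) :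
    ftr4 Ginv R = -tr2 Ginv (ptr4 Ginv R) := by
  have h : ftr4 Ginv R = -∑ μ, ∑ μ', Ginv μ μ' * ptr4 Ginv R μ μ' := by
    simp only [ftr4, ptr4, mul_sum, ← sum_neg_distrib]
    refine sum_congr rfl fun μ _ => sum_congr rfl fun μ' _ =>
      sum_congr rfl fun ν _ => sum_congr rfl fun ν' _ => ?_
    rw [hR]; ring
  rw [h, tr2, sum_comm]
  simp only [hG]

theorem tr2_dot2_comm (hG : ∀ a b, Ginv a b = Ginv b a) {A B : ι → ι → ℝ}
    (hA : ∀ a b, A a b = A b a) (hB : ∀ a b, B a b = B b a) :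
    tr2 Ginv (dot2 Ginv B A) = tr2 Ginv (dot2 Ginv A B) := by
  simp only [tr2, dot2_swap hG hA hB]
  rw [sum_comm]
  simp only [hG]

theorem ftr4_KN (hG : ∀ a b, Ginv a b = Ginv b a) {A B : ι → ι → ℝ}
    (hA : ∀ a b, A a b = A b a) (hB : ∀ a b, B a b = B b a) :
    ftr4 Ginv (KN A B) = 2 * (tr2 Ginv A * tr2 Ginv B) - 2 * tr2 Ginv (dot2 Ginv A B) := by
  have hKN : ∀ μ ν l κ, KN A B μ ν κ l = -KN A B μ ν l κ := by
    intro μ ν l κ; simp only [KN]; ring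
  have hBA := tr2_dot2_comm hG hA hB
  rw [ftr4_eq_neg_tr2_ptr4 hG hKN]
  simp only [tr2, ptr4_KN hG hA hB, mul_add, mul_sub, sum_add_distrib, sum_sub_distrib] at hBA ⊢
  simp only [mul_left_comm (Ginv _ _), ← mul_sum]
  rw [hBA]
  ring

end Contraction

section Projector

omit [DecidableEq ι]

variable {Ginv g P : ι → ι → ℝ} {n : ℕ}

variable (hgg : ∀ μ ν, dot2 Ginv g g μ ν = g μ ν) (hPP : ∀ μ ν, dot2 Ginv P P μ ν = P μ ν)
  (hgP : ∀ μ ν, dot2 Ginv g P μ ν = 0) (hPg : ∀ μ ν, dot2 Ginv P g μ ν = 0)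
include hgg hPP hgP hPg

theorem dot4_Tgst_self (ρ : ℝ) (μ ν l κ : ι) :
    dot4 Ginv (Tgst n ρ g P) (Tgst n ρ g P) μ ν l κ =
      ρ ^ 2 * (((n : ℝ) - 2) ^ 2 * ((n : ℝ) - 3) ^ 2 * KN g g μ ν l κ + 4 * KN P P μ ν l κ
        + 2 * ((n : ℝ) - 3) ^ 2 * KN g P μ ν l κ) := by
  set a : ℝ := ((n : ℝ) - 2) * ((n : ℝ) - 3) / 2
  set b : ℝ := (n : ℝ) - 3
  have expand : dot4 Ginv (Tgst n ρ g P) (Tgst n ρ g P) μ ν l κ =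
      ρ ^ 2 * (a ^ 2 * dot4 Ginv (KN g g) (KN g g) μ ν l κ
        + a * dot4 Ginv (KN g g) (KN P P) μ ν l κ - a * b * dot4 Ginv (KN g g) (KN g P) μ ν l κ
        + a * dot4 Ginv (KN P P) (KN g g) μ ν l κ + dot4 Ginv (KN P P) (KN P P) μ ν l κ
        - b * dot4 Ginv (KN P P) (KN g P) μ ν l κ - a * b * dot4 Ginv (KN g P) (KN g g) μ ν l κ
        - b * dot4 Ginv (KN g P) (KN P P) μ ν l κ + b ^ 2 * dot4 Ginv (KN g P) (KN g P) μ ν l κ) := by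
    simp only [dot4, Tgst, mul_sum, ← sum_add_distrib, ← sum_sub_distrib]
    refine sum_congr rfl fun σ _ => sum_congr rfl fun τ _ =>
      sum_congr rfl fun σ' _ => sum_congr rfl fun τ' _ => ?_
    ring
  rw [expand]
  simp only [dot4_KN_KN, KN, hgg, hPP, hgP, hPg]
  ring

variable (hG : ∀ a b, Ginv a b = Ginv b a) (hg : ∀ a b, g a b = g b a) (hP : ∀ a b, P a b = P b a)
  (htrg : tr2 Ginv g = 2) (htrP : tr2 Ginv P = (n : ℝ) - 2)
include hG hg hP htrg htrP

theorem ptr4_dot4_Tgst_self (ρ : ℝ) (μ κ : ι) :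
    ptr4 Ginv (dot4 Ginv (Tgst n ρ g P) (Tgst n ρ g P)) μ κ =
      ρ ^ 2 * (-2 * ((n : ℝ) - 1) * ((n : ℝ) - 2) * ((n : ℝ) - 3) ^ 2 * g μ κ
        - 4 * ((n : ℝ) - 1) * ((n : ℝ) - 3) * P μ κ) := by
  have expand : ptr4 Ginv (dot4 Ginv (Tgst n ρ g P) (Tgst n ρ g P)) μ κ =
      ρ ^ 2 * (((n : ℝ) - 2) ^ 2 * ((n : ℝ) - 3) ^ 2 * ptr4 Ginv (KN g g) μ κ
        + 4 * ptr4 Ginv (KN P P) μ κ + 2 * ((n : ℝ) - 3) ^ 2 * ptr4 Ginv (KN g P) μ κ) := by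
    simp only [ptr4, mul_sum, ← sum_add_distrib]
    refine sum_congr rfl fun ν _ => sum_congr rfl fun ν' _ => ?_
    rw [dot4_Tgst_self hgg hPP hgP hPg]
    ring
  rw [expand, ptr4_KN hG hg hg, ptr4_KN hG hP hP, ptr4_KN hG hg hP]
  simp only [hgg, hPP, hgP, hPg, htrg, htrP]
  ring

theorem ftr4_dot4_Tgst_self (ρ : ℝ) :
    ftr4 Ginv (dot4 Ginv (Tgst n ρ g P) (Tgst n ρ g P)) =
      ρ ^ 2 * (4 * ((n : ℝ) - 1) * ((n : ℝ) - 2) ^ 2 * ((n : ℝ) - 3)) := by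
  have expand : ftr4 Ginv (dot4 Ginv (Tgst n ρ g P) (Tgst n ρ g P)) =
      ρ ^ 2 * (((n : ℝ) - 2) ^ 2 * ((n : ℝ) - 3) ^ 2 * ftr4 Ginv (KN g g)
        + 4 * ftr4 Ginv (KN P P) + 2 * ((n : ℝ) - 3) ^ 2 * ftr4 Ginv (KN g P)) := by
    simp only [ftr4, mul_sum, ← sum_add_distrib]
    refine sum_congr rfl fun μ _ => sum_congr rfl fun μ' _ =>
      sum_congr rfl fun ν _ => sum_congr rfl fun ν' _ => ?_
    rw [dot4_Tgst_self hgg hPP hgP hPg]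
    ring
  have hgg' : dot2 Ginv g g = g := funext₂ hgg
  have hPP' : dot2 Ginv P P = P := funext₂ hPP
  have hgP' : tr2 Ginv (dot2 Ginv g P) = 0 := by simp only [tr2, hgP, mul_zero, sum_const_zero]
  rw [expand, ftr4_KN hG hg hg, ftr4_KN hG hP hP, ftr4_KN hG hg hP, hgg', hPP', hgP', htrg, htrP]
  ring

end Projector

theorem projector_recovery_general {n : ℕ} (hn : 5 ≤ n)
    (Gbar Ginv g P : ι → ι → ℝ) (ρ : ℝ)
    (hGsymm : ∀ μ ν, Gbar μ ν = Gbar ν μ)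
    (hGinv : ∀ μ l, ∑ ν, Gbar μ ν * Ginv ν l = if μ = l then (1 : ℝ) else 0)
    (hsplit : ∀ μ ν, Gbar μ ν = g μ ν + P μ ν)
    (hgsymm : ∀ μ ν, g μ ν = g ν μ) (hPsymm : ∀ μ ν, P μ ν = P ν μ)
    (hgg : ∀ μ ν, dot2 Ginv g g μ ν = g μ ν)
    (hPP : ∀ μ ν, dot2 Ginv P P μ ν = P μ ν)
    (hgP : ∀ μ ν, dot2 Ginv g P μ ν = 0)
    (htrg : tr2 Ginv g = 2)
    (htrP : tr2 Ginv P = (n : ℝ) - 2)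
    (hρ : ρ ≠ 0) :
    ftr4 Ginv (dot4 Ginv (Tgst n ρ g P) (Tgst n ρ g P)) ≠ 0 ∧
    ∀ l κ,
      P l κ =
        2 * ((n : ℝ) - 2) ^ 2 / (((n : ℝ) - 1) * ((n : ℝ) - 4))
          * (ptr4 Ginv (dot4 Ginv (Tgst n ρ g P) (Tgst n ρ g P)) l κ
            / ftr4 Ginv (dot4 Ginv (Tgst n ρ g P) (Tgst n ρ g P)))
        + ((n : ℝ) - 2) * ((n : ℝ) - 3) / (((n : ℝ) - 1) * ((n : ℝ) - 4))
          * Gbar l κ := by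
  have hG := symm_of_inverse hGsymm hGinv
  have hPg : ∀ μ ν, dot2 Ginv P g μ ν = 0 := fun μ ν => by
    rw [dot2_swap hG hgsymm hPsymm, hgP]
  have hptr := ptr4_dot4_Tgst_self hgg hPP hgP hPg hG hgsymm hPsymm htrg htrP ρ
  have hftr := ftr4_dot4_Tgst_self hgg hPP hgP hPg hG hgsymm hPsymm htrg htrP ρ
  have hn5 : (5 : ℝ) ≤ n := by exact_mod_cast hn
  have h1 : (n : ℝ) - 1 ≠ 0 := by linarith
  have h2 : (n : ℝ) - 2 ≠ 0 := by linarith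
  have h3 : (n : ℝ) - 3 ≠ 0 := by linarith
  have h4 : (n : ℝ) - 4 ≠ 0 := by linarith
  have hden : ftr4 Ginv (dot4 Ginv (Tgst n ρ g P) (Tgst n ρ g P)) ≠ 0 := by
    rw [hftr]
    exact mul_ne_zero (pow_ne_zero 2 hρ) (by simp [h1, h2, h3])
  refine ⟨hden, fun l κ => ?_⟩
  rw [hptr, hftr, hsplit]
  field_simp
  ring

/-- Under the projector hypotheses with `n ≥ 5` and `ρ ≠ 0`,
the projector can be recovered from the curvature:
`P_{λκ} = [2(n−2)²/((n−1)(n−4))]·(T·T)_{λν}{}^ν{}_κ/(T·T)_{μν}{}^{μν}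
  + [(n−2)(n−3)/((n−1)(n−4))]·Ḡ_{λκ}`, the denominator being nonzero. -/
theorem projector_recovery {n : ℕ} (hn : 5 ≤ n) (hcard : Fintype.card ι = n)
    (Gbar Ginv g P : ι → ι → ℝ) (ρ : ℝ)
    (hGsymm : ∀ μ ν, Gbar μ ν = Gbar ν μ)
    (hGinv : ∀ μ l, ∑ ν, Gbar μ ν * Ginv ν l = if μ = l then (1 : ℝ) else 0)
    (hsplit : ∀ μ ν, Gbar μ ν = g μ ν + P μ ν)
    (hgsymm : ∀ μ ν, g μ ν = g ν μ) (hPsymm : ∀ μ ν, P μ ν = P ν μ)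
    (hgg : ∀ μ ν, dot2 Ginv g g μ ν = g μ ν)
    (hPP : ∀ μ ν, dot2 Ginv P P μ ν = P μ ν)
    (hgP : ∀ μ ν, dot2 Ginv g P μ ν = 0)
    (htrg : tr2 Ginv g = 2)
    (htrP : tr2 Ginv P = (n : ℝ) - 2)
    (hρ : ρ ≠ 0) :
    ftr4 Ginv (dot4 Ginv (Tgst n ρ g P) (Tgst n ρ g P)) ≠ 0 ∧
    ∀ l κ,
      P l κ =
        2 * ((n : ℝ) - 2) ^ 2 / (((n : ℝ) - 1) * ((n : ℝ) - 4))
          * (ptr4 Ginv (dot4 Ginv (Tgst n ρ g P) (Tgst n ρ g P)) l κ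
            / ftr4 Ginv (dot4 Ginv (Tgst n ρ g P) (Tgst n ρ g P)))
        + ((n : ℝ) - 2) * ((n : ℝ) - 3) / (((n : ℝ) - 1) * ((n : ℝ) - 4))
          * Gbar l κ :=
  projector_recovery_general hn Gbar Ginv g P ρ hGsymm hGinv hsplit hgsymm hPsymm hgg hPP hgP htrg
    htrP hρ
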